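/- Let N > 0 and let Q, X, Y, Z, R be nonnegative reals satisfying Q ≥ 2·N, 3·X + 2·Y + Z = 6·N, Q + X + Y + Z ≤ 2·R·N, and 10·Q + 6·Y + 9·X + 20·N ≤ 20·R·N. Then R ≥ 76/29. -/

import Mathlib

theorem stmt_13_general (N Q X Y Z R : ℝ) (hN : 0 < N)
    (hY : 0 ≤ Y)
    (hQ : 2 * N ≤ Q) (h1 : 3 * X + 2 * Y + Z = 6 * N)
    (h2 : Q + X + Y + Z ≤ 2 * R * N)
    (h3 : 10 * Q + 6 * Y + 9 * X + 20 * N ≤ 20 * R * N) :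
    R ≥ 76 / 29 := by
  -- LP duality certificate: `9 * h2 + 2 * h3`, with `h1` eliminating `Z`.
  have certificate : 29 * Q + 3 * Y + 94 * N ≤ 58 * R * N := by
    linear_combination 9 * h2 + 2 * h3 - 9 * h1
  have scaled : 76 / 29 * N ≤ R * N := by linarith
  exact le_of_mul_le_mul_right scaled hN

theorem stmt_13 (N Q X Y Z R : ℝ) (hN : 0 < N) (hQ0 : 0 ≤ Q) (hX : 0 ≤ X)
    (hY : 0 ≤ Y) (hZ : 0 ≤ Z) (hR : 0 ≤ R)
    (hQ : 2 * N ≤ Q) (h1 : 3 * X + 2 * Y + Z = 6 * N)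
    (h2 : Q + X + Y + Z ≤ 2 * R * N)
    (h3 : 10 * Q + 6 * Y + 9 * X + 20 * N ≤ 20 * R * N) :
    R ≥ 76 / 29 :=
  stmt_13_general N Q X Y Z R hN hY hQ h1 h2 h3
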